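/- arXiv:2510.01344 — 4 statements merged into one kernel-verified Lean document; each statement's English description precedes it below -/
import Mathlib

section
/- Let a be a positive odd integer and b a positive even integer with gcd(a,b) = 1. If n is odd and there exist nonnegative integers ξ₁, ξ₂, ξ₃, ξ₄ with (ξ₁ − ξ₂)·a + (ξ₃ − ξ₄)·b = 0 and ξ₁ + ξ₂ + ξ₃ + ξ₄ = n, then n ≥ a + b. -/
/-- When `a` is odd and `b` is even (coprime, positive), a steady-term
representation at odd order `n` forces `n ≥ a + b`. -/
theorem pumping_order_lower_bound (a b : ℕ) (ha : 0 < a) (hb : 0 < b)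
    (hao : Odd a) (hbe : Even b) (hab : Nat.gcd a b = 1)
    (n : ℕ) (hn : Odd n)
    (hrep : ∃ ξ₁ ξ₂ ξ₃ ξ₄ : ℕ,
      ((ξ₁ : ℤ) - ξ₂) * a + ((ξ₃ : ℤ) - ξ₄) * b = 0 ∧
      ξ₁ + ξ₂ + ξ₃ + ξ₄ = n) :
    a + b ≤ n := by
  obtain ⟨ξ₁, ξ₂, ξ₃, ξ₄, heq, hsum⟩ := hrep
  set d₁ : ℤ := (ξ₁ : ℤ) - ξ₂ with hd₁
  set d₂ : ℤ := (ξ₃ : ℤ) - ξ₄ with hd₂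
  have hcop : IsCoprime (b : ℤ) (a : ℤ) := by
    rw [Int.isCoprime_iff_gcd_eq_one, Int.gcd_natCast_natCast, Nat.gcd_comm]
    exact hab
  have hbd : (b : ℤ) ∣ d₁ := by
    have : (b : ℤ) ∣ d₁ * a := ⟨-d₂, by linarith⟩
    exact hcop.dvd_of_dvd_mul_right this
  have had : (a : ℤ) ∣ d₂ := by
    have : (a : ℤ) ∣ d₂ * b := ⟨-d₁, by linarith⟩
    exact (hcop.symm).dvd_of_dvd_mul_right this
  have hd1ne : d₁ ≠ 0 := by
    intro h0
    have h2 : d₂ = 0 := by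
      have : d₂ * b = 0 := by rw [h0] at heq; linarith
      rcases mul_eq_zero.mp this with h | h
      · exact h
      · exact absurd h (by exact_mod_cast hb.ne')
    have h12 : ξ₁ = ξ₂ := by omega
    have h34 : ξ₃ = ξ₄ := by omega
    rcases hn with ⟨k, hk⟩
    omega
  have hd2ne : d₂ ≠ 0 := by
    intro h0
    apply hd1ne
    have : d₁ * a = 0 := by rw [h0] at heq; linarith
    rcases mul_eq_zero.mp this with h | h
    · exact h
    · exact absurd h (by exact_mod_cast ha.ne')
  have h1 : (b : ℤ) ≤ |d₁| := Int.le_of_dvd (abs_pos.mpr hd1ne) ((dvd_abs _ _).mpr hbd)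
  have h2 : (a : ℤ) ≤ |d₂| := Int.le_of_dvd (abs_pos.mpr hd2ne) ((dvd_abs _ _).mpr had)
  have hx1 : |d₁| ≤ (ξ₁ : ℤ) + ξ₂ := by
    rw [abs_le]; constructor <;> simp [hd₁] <;> omega
  have hx2 : |d₂| ≤ (ξ₃ : ℤ) + ξ₄ := by
    rw [abs_le]; constructor <;> simp [hd₂] <;> omega
  have : (a : ℤ) + b ≤ n := by
    have := hsum
    push_cast [← hsum]
    linarith
  exact_mod_cast this
end

section
/- Let a be a positive odd integer and b a positive even integer. For every odd integer n with n ≥ a + b there exist nonnegative integers ξ₁, ξ₂, ξ₃, ξ₄ with (ξ₁ − ξ₂)·a + (ξ₃ − ξ₄)·b = 0 and ξ₁ + ξ₂ + ξ₃ + ξ₄ = n. In particular such a representation exists at the odd order n = a + b (for example ξ₁ = b, ξ₂ = 0, ξ₃ = 0, ξ₄ = a). -/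
/-- When `a` is odd and `b` is even (both positive), every odd order
`n ≥ a + b` admits a steady-term representation; in particular the odd
order `n = a + b` does (e.g. `ξ₁ = b, ξ₂ = 0, ξ₃ = 0, ξ₄ = a`). -/
theorem pumping_order_attained (a b : ℕ) (ha : 0 < a) (hb : 0 < b)
    (hao : Odd a) (hbe : Even b) :
    ∀ n : ℕ, Odd n → a + b ≤ n →
      ∃ ξ₁ ξ₂ ξ₃ ξ₄ : ℕ,
        ((ξ₁ : ℤ) - ξ₂) * a + ((ξ₃ : ℤ) - ξ₄) * b = 0 ∧
        ξ₁ + ξ₂ + ξ₃ + ξ₄ = n := by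
  intro n hn hle
  have hab : Odd (a + b) := hao.add_even hbe
  obtain ⟨k, hk⟩ : ∃ k, n = a + b + 2 * k := by
    obtain ⟨i, hi⟩ := hn; obtain ⟨j, hj⟩ := hab; exact ⟨i - j, by omega⟩
  refine ⟨b, 0, k, a + k, ?_, ?_⟩
  · push_cast; ring
  · omega
end

section
/- Let a be a positive odd integer and b a positive even integer with gcd(a,b) = 1. An odd integer n admits nonnegative integers ξ₁, ξ₂, ξ₃, ξ₄ with (ξ₁ − ξ₂)·a + (ξ₃ − ξ₄)·b = 0 and ξ₁ + ξ₂ + ξ₃ + ξ₄ = n if and only if n ≥ a + b. Consequently, a + b is the smallest odd order admitting such a representation. -/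
/-- For coprime positive frequencies with `a` odd and `b` even, an odd order
`n` admits a steady-term representation iff `n ≥ a + b`; consequently
`a + b` is the least odd order admitting one (Result 3). -/
theorem pumping_order_characterization (a b : ℕ) (ha : 0 < a) (hb : 0 < b)
    (hao : Odd a) (hbe : Even b) (hab : Nat.gcd a b = 1) :
    (∀ n : ℕ, Odd n →
      ((∃ ξ₁ ξ₂ ξ₃ ξ₄ : ℕ,
          ((ξ₁ : ℤ) - ξ₂) * a + ((ξ₃ : ℤ) - ξ₄) * b = 0 ∧
          ξ₁ + ξ₂ + ξ₃ + ξ₄ = n) ↔ a + b ≤ n)) ∧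
    IsLeast {n : ℕ | Odd n ∧ ∃ ξ₁ ξ₂ ξ₃ ξ₄ : ℕ,
        ((ξ₁ : ℤ) - ξ₂) * a + ((ξ₃ : ℤ) - ξ₄) * b = 0 ∧
        ξ₁ + ξ₂ + ξ₃ + ξ₄ = n} (a + b) := by
  have hcop : IsCoprime (a : ℤ) (b : ℤ) := by
    rw [Int.isCoprime_iff_gcd_eq_one, Int.gcd_natCast_natCast, hab]
  have main : ∀ n : ℕ, Odd n →
      ((∃ ξ₁ ξ₂ ξ₃ ξ₄ : ℕ,
          ((ξ₁ : ℤ) - ξ₂) * a + ((ξ₃ : ℤ) - ξ₄) * b = 0 ∧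
          ξ₁ + ξ₂ + ξ₃ + ξ₄ = n) ↔ a + b ≤ n) := by
    intro n hn
    obtain ⟨m, hm⟩ := hn
    constructor
    · rintro ⟨ξ₁, ξ₂, ξ₃, ξ₄, heq, hsum⟩
      set u : ℤ := (ξ₁ : ℤ) - ξ₂ with hu
      set v : ℤ := (ξ₃ : ℤ) - ξ₄ with hv
      by_cases hu0 : u = 0
      · have hv0 : v = 0 := by
          have : v * b = 0 := by rw [hu0] at heq; linarith
          rcases mul_eq_zero.mp this with h | h
          · exact h
          · exact absurd h (by positivity)
        exfalso
        have h1 : (ξ₁ : ℤ) = ξ₂ := by omega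
        have h2 : (ξ₃ : ℤ) = ξ₄ := by omega
        omega
      · have hv0 : v ≠ 0 := by
          intro h
          apply hu0
          have : u * a = 0 := by rw [h] at heq; linarith
          rcases mul_eq_zero.mp this with h' | h'
          · exact h'
          · exact absurd h' (by positivity)
        have hba : (b : ℤ) ∣ u := by
          exact hcop.symm.dvd_of_dvd_mul_right
            (⟨-v, by linarith⟩ : (b : ℤ) ∣ u * a)
        have hav : (a : ℤ) ∣ v := by
          exact hcop.dvd_of_dvd_mul_right
            (⟨-u, by linarith⟩ : (a : ℤ) ∣ v * b)
        have h1 : b ≤ u.natAbs :=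
          Nat.le_of_dvd (Int.natAbs_pos.mpr hu0)
            (Int.natAbs_dvd_natAbs.mpr (by simpa using hba))
        have h2 : a ≤ v.natAbs :=
          Nat.le_of_dvd (Int.natAbs_pos.mpr hv0)
            (Int.natAbs_dvd_natAbs.mpr (by simpa using hav))
        omega
    · intro h
      obtain ⟨p, hp⟩ := hao
      obtain ⟨q, hq⟩ := hbe
      refine ⟨b + (n - a - b) / 2, (n - a - b) / 2, 0, a, ?_, by omega⟩
      push_cast
      ring
  refine ⟨main, ⟨⟨?_, b, 0, 0, a, by push_cast; ring, by ring⟩, ?_⟩⟩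
  · exact hao.add_even hbe
  · rintro n ⟨hn, hrep⟩
    exact (main n hn).mp hrep
end

section
/- Let a be an odd positive integer and b an even positive integer. Then there is no real number φ such that sin(a(t + φ)) + sin(b(t + φ)) = −(sin(a t) + sin(b t)) for all real t; that is, the waveform t ↦ sin(at) + sin(bt) is non-antiperiodic. -/
/-!
Summing the antiperiodicity relation at `t - φ/2` and using `sin x + sin y = 2 sin((x+y)/2) cos((x-y)/2)`
gives `sin(at) cos(aφ/2) + sin(bt) cos(bφ/2) = 0` for all `t`. Evaluating at `t = π/b` (where
`sin(aπ/b) ≠ 0` since `b ∤ a`) and then at `t = π/(2b)` forces `cos(aφ/2) = cos(bφ/2) = 0`, i.e.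
`aφ = (2k+1)π` and `bφ = (2m+1)π`. Then `b(2k+1) = a(2m+1)`, whose left side is even and right side odd.
-/

open Real

theorem sin_mul_mul_cos_add_sin_mul_mul_cos_eq_zero_of_antiperiodic {a b φ : ℝ}
    (h : Function.Antiperiodic (fun t ↦ sin (a * t) + sin (b * t)) φ) (t : ℝ) :
    sin (a * t) * cos (a * (φ / 2)) + sin (b * t) * cos (b * (φ / 2)) = 0 := by
  have sum_eq (c : ℝ) : sin (c * (t - φ / 2 + φ)) + sin (c * (t - φ / 2)) =
      2 * (sin (c * t) * cos (c * (φ / 2))) := by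
    rw [sin_add_sin]
    ring_nf
  have := h (t - φ / 2)
  simp only at this
  linarith [sum_eq a, sum_eq b]

theorem sin_intCast_mul_pi_div_ne_zero {a b : ℤ} (hb : b ≠ 0) (hba : ¬ b ∣ a) :
    sin (a * (π / b)) ≠ 0 := by
  intro hsin
  obtain ⟨n, hn⟩ := sin_eq_zero_iff.mp hsin
  have hb' : (b : ℝ) ≠ 0 := Int.cast_ne_zero.mpr hb
  have : ((b * n : ℤ) : ℝ) = a := by
    field_simp at hn
    push_cast
    nlinarith [pi_pos]
  exact hba ⟨n, by exact_mod_cast this.symm⟩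

theorem coeffs_eq_zero_of_forall_sin_mul_add_sin_mul_eq_zero {a b : ℤ} (hb : b ≠ 0)
    (hba : ¬ b ∣ a) {α β : ℝ} (h : ∀ t : ℝ, sin (a * t) * α + sin (b * t) * β = 0) :
    α = 0 ∧ β = 0 := by
  have hb' : (b : ℝ) ≠ 0 := Int.cast_ne_zero.mpr hb
  have hα : α = 0 := by
    have := h (π / b)
    rw [mul_div_cancel₀ π hb', sin_pi, zero_mul, add_zero] at this
    exact (mul_eq_zero.mp this).resolve_left (sin_intCast_mul_pi_div_ne_zero hb hba)
  have hβ : β = 0 := by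
    have := h (π / 2 / b)
    rwa [mul_div_cancel₀ _ hb', sin_pi_div_two, one_mul, hα, mul_zero, zero_add] at this
  exact ⟨hα, hβ⟩

theorem cos_intCast_mul_ne_zero_of_cos_intCast_mul_eq_zero {a b : ℤ} (ha : Odd a)
    (hb : Even b) {ψ : ℝ} (hcos : cos (a * ψ) = 0) : cos (b * ψ) ≠ 0 := by
  intro hcos'
  obtain ⟨k, hk⟩ := cos_eq_zero_iff.mp hcos
  obtain ⟨m, hm⟩ := cos_eq_zero_iff.mp hcos'
  have hreal : ((b * (2 * k + 1) : ℤ) : ℝ) = ((a * (2 * m + 1) : ℤ) : ℝ) := by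
    apply mul_right_cancel₀ pi_ne_zero
    push_cast
    linear_combination (-2 * b : ℝ) * hk + (2 * a : ℝ) * hm
  have heven : Even (a * (2 * m + 1)) := Int.cast_injective hreal ▸ hb.mul_right _
  exact Int.not_even_iff_odd.mpr (ha.mul (odd_two_mul_add_one m)) heven

theorem waveform_non_antiperiodic_general (a b : ℕ) (hb : 0 < b)
    (hao : Odd a) (hbe : Even b) :
    ¬ ∃ φ : ℝ, ∀ t : ℝ,
      Real.sin (a * (t + φ)) + Real.sin (b * (t + φ)) =
        -(Real.sin (a * t) + Real.sin (b * t)) := by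
  rintro ⟨φ, h⟩
  have hb' : (b : ℤ) ≠ 0 := by exact_mod_cast hb.ne'
  have hba : ¬ (b : ℤ) ∣ a := fun hdvd ↦
    Nat.not_even_iff_odd.mpr (hao.of_dvd_nat (Int.natCast_dvd_natCast.mp hdvd)) hbe
  have hcoef := sin_mul_mul_cos_add_sin_mul_mul_cos_eq_zero_of_antiperiodic (a := a) (b := b) h
  obtain ⟨hcos_a, hcos_b⟩ :=
    coeffs_eq_zero_of_forall_sin_mul_add_sin_mul_eq_zero hb' hba (by exact_mod_cast hcoef)
  exact cos_intCast_mul_ne_zero_of_cos_intCast_mul_eq_zero (a := a) (b := b)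
    (by exact_mod_cast hao) (by exact_mod_cast hbe) (by exact_mod_cast hcos_a)
    (by exact_mod_cast hcos_b)

/-- When `a` is odd and `b` is even (both positive), the waveform
`sin(at) + sin(bt)` is non-antiperiodic: no shift `φ` negates it. -/
theorem waveform_non_antiperiodic (a b : ℕ) (ha : 0 < a) (hb : 0 < b)
    (hao : Odd a) (hbe : Even b) :
    ¬ ∃ φ : ℝ, ∀ t : ℝ,
      Real.sin (a * (t + φ)) + Real.sin (b * (t + φ)) =
        -(Real.sin (a * t) + Real.sin (b * t)) :=
  waveform_non_antiperiodic_general a b hb hao hbe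
end
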